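/- Let k ≥ 3, J > 0 and s : ZMod k → {−1,+1} with ∏_i s_i = −1, and let A be the k × k real matrix with A_{ii} = −2, A_{i,c(i)} = s_i J (c(i) = i+1 mod k) and all other entries 0. If J < 2/cos(π/k) then every complex eigenvalue of A has strictly negative real part; if J > 2/cos(π/k) then J e^{iπ/k} − 2 is an eigenvalue of A with strictly positive real part and strictly positive imaginary part (and its complex conjugate is also an eigenvalue). In particular, the fixed point (1/2,…,1/2) of the frustrated cyclic system loses linear stability exactly at J_c = 2/cos(π/k), through a conjugate pair of non-real eigenvalues crossing the imaginary axis (a Hopf bifurcation). -/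

import Mathlib

/-!
Writing `A v = z v` coordinatewise gives the cyclic recurrence `s i J v (i + 1) = (z + 2) v i`.
Going once around the cycle forces `(z + 2) ^ k = J ^ k ∏ s i = -J ^ k`, and conversely every
such `z` gives an eigenvector by solving the recurrence from `v 0 = 1`; so the eigenvalues are the
`J ζ - 2` with `ζ ^ k = -1`. Such a `ζ` is `exp (i (2n + 1) π / k)`, so `Re ζ ≤ cos (π / k)` with
equality at `ζ = exp (± i π / k)`, and the sign of `J cos (π / k) - 2` decides stability.
-/

/-- The Jacobian matrix at `(1/2,…,1/2)` of the cyclic-interaction field: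
`A_{ii} = −2`, `A_{i,i+1} = s_i J`, all other entries `0`. -/
noncomputable def cycA (k : ℕ) (J : ℝ) (s : ZMod k → ℝ) :
    Matrix (ZMod k) (ZMod k) ℝ :=
  Matrix.of fun i j => if j = i then -2 else if j = i + 1 then s i * J else 0

open Finset Real

theorem ZMod.prod_range_natCast {M : Type*} [CommMonoid M] {k : ℕ} [NeZero k]
    (f : ZMod k → M) : ∏ j ∈ range k, f j = ∏ i, f i :=
  prod_nbij' Nat.cast ZMod.val (fun _ _ => mem_univ _)
    (fun i _ => mem_range.2 (ZMod.val_lt i))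
    (fun _ hj => ZMod.val_cast_of_lt (mem_range.1 hj))
    (fun i _ => ZMod.natCast_zmod_val i) (fun _ _ => rfl)

section CyclicRecurrence

variable {R : Type*} {k : ℕ} {a v : ZMod k → R} {μ : R}

theorem pow_mul_eq_prod_range_mul_of_recurrence [CommMonoid R]
    (h : ∀ i, a i * v (i + 1) = μ * v i) (i : ZMod k) (n : ℕ) :
    μ ^ n * v i = (∏ m ∈ range n, a (i + m)) * v (i + n) := by
  induction n with
  | zero => simp
  | succ n ih =>
    rw [pow_succ', mul_assoc, ih, prod_range_succ, Nat.cast_succ, ← add_assoc, mul_assoc _ (a _),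
      h, mul_left_comm]

theorem pow_eq_prod_of_recurrence [CommMonoidWithZero R] [IsCancelMulZero R] [NeZero k]
    (h : ∀ i, a i * v (i + 1) = μ * v i) (hv : v ≠ 0) : μ ^ k = ∏ i, a i := by
  obtain ⟨i, hi⟩ := Function.ne_iff.1 hv
  have hk := pow_mul_eq_prod_range_mul_of_recurrence h i k
  rw [ZMod.natCast_self, add_zero, ZMod.prod_range_natCast (fun j => a (i + j)),
    show ∏ j, a (i + j) = ∏ j, a j from Equiv.prod_comp (Equiv.addLeft i) a] at hk
  exact mul_right_cancel₀ hi hk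

/-- The solution is `v i = μ ^ i / (a 0 ⋯ a (i - 1))` for `0 ≤ i < k`; the condition
`μ ^ k = ∏ i, a i` is exactly what closes the cycle at `i = k - 1`. -/
theorem exists_ne_zero_recurrence_of_pow_eq_prod [Field R] [NeZero k] (ha : ∀ i, a i ≠ 0)
    (hμ : μ ^ k = ∏ i, a i) : ∃ v : ZMod k → R, v ≠ 0 ∧ ∀ i, a i * v (i + 1) = μ * v i := by
  set u : ℕ → R := fun n => μ ^ n / ∏ j ∈ range n, a j
  have hprod_ne (n : ℕ) : ∏ j ∈ range n, a j ≠ 0 := prod_ne_zero_iff.2 fun j _ => ha j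
  have hu (n : ℕ) : a n * u (n + 1) = μ * u n := by
    simp only [u, prod_range_succ, pow_succ]
    field_simp [hprod_ne n, ha n]
  have hu_cycle : u k = u 0 := by
    simp [u, ZMod.prod_range_natCast, hμ, prod_ne_zero_iff.2 fun j _ => ha j]
  refine ⟨fun i => u i.val, fun h => by simpa [u] using congrFun h 0, fun i => ?_⟩
  have hsucc : i + 1 = ((i.val + 1 : ℕ) : ZMod k) := by push_cast [ZMod.natCast_zmod_val]; rfl
  have hval : (i + 1).val = i.val + 1 ∨ i.val + 1 = k := by
    rcases Nat.lt_or_eq_of_le (ZMod.val_lt i) with hlt | heq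
    · exact .inl (by rw [hsucc, ZMod.val_cast_of_lt hlt])
    · exact .inr heq
  have hu_succ : u (i + 1).val = u (i.val + 1) := by
    rcases hval with h | h
    · rw [h]
    · rw [hsucc, h, ZMod.natCast_self, ZMod.val_zero, hu_cycle]
  simpa [hu_succ, ZMod.natCast_zmod_val] using hu i.val

end CyclicRecurrence

theorem cycA_map_mulVec_apply {k : ℕ} [NeZero k] (hk : 1 < k) (J : ℝ) (s : ZMod k → ℝ)
    (v : ZMod k → ℂ) (i : ZMod k) :
    ((cycA k J s).map (fun a => (a : ℂ))).mulVec v i = -2 * v i + s i * J * v (i + 1) := by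
  have : Fact (1 < k) := ⟨hk⟩
  have hne : i + 1 ≠ i := add_ne_left.2 one_ne_zero
  rw [Matrix.mulVec, dotProduct, Fintype.sum_eq_add i (i + 1) hne.symm fun j hj => by
    simp [cycA, hj.1, hj.2]]
  simp [cycA, hne]

theorem hasEigenvalue_cycA_iff {k : ℕ} [NeZero k] (hk : 1 < k) {J : ℝ} (hJ : J ≠ 0)
    {s : ZMod k → ℝ} (hprod : ∏ i, s i = -1) {z : ℂ} :
    Module.End.HasEigenvalue (Matrix.toLin' ((cycA k J s).map (fun a => (a : ℂ)))) z ↔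
      ∃ ζ : ℂ, ζ ^ k = -1 ∧ z = J * ζ - 2 := by
  have hJ' : (J : ℂ) ≠ 0 := by exact_mod_cast hJ
  have hrec (v : ZMod k → ℂ) : v ∈ Module.End.eigenspace
      (Matrix.toLin' ((cycA k J s).map (fun a => (a : ℂ)))) z ↔
      ∀ i, (s i * J : ℂ) * v (i + 1) = (z + 2) * v i := by
    simp only [Module.End.mem_eigenspace_iff, Matrix.toLin'_apply, funext_iff,
      cycA_map_mulVec_apply hk, Pi.smul_apply, smul_eq_mul]
    exact forall_congr' fun i => ⟨fun h => by linear_combination h, fun h => by linear_combination h⟩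
  have hweights : ∏ i, (s i * J : ℂ) = -J ^ k := by
    rw [prod_mul_distrib, prod_const, card_univ, ZMod.card, ← Complex.ofReal_prod, hprod]
    push_cast; ring
  constructor
  · intro hz
    obtain ⟨v, hv, hv0⟩ := hz.exists_hasEigenvector
    have hpow := pow_eq_prod_of_recurrence ((hrec v).1 hv) hv0
    refine ⟨(z + 2) / J, ?_, by field_simp; ring⟩
    rw [div_pow, hpow, hweights, neg_div, div_self (pow_ne_zero k hJ')]
  · rintro ⟨ζ, hζ, rfl⟩
    have hs (i : ZMod k) : s i ≠ 0 :=
      prod_ne_zero_iff.1 (by rw [hprod]; norm_num) i (mem_univ i)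
    obtain ⟨v, hv0, hv⟩ := exists_ne_zero_recurrence_of_pow_eq_prod (μ := J * ζ)
      (fun i => mul_ne_zero (Complex.ofReal_ne_zero.2 (hs i)) hJ')
      (by rw [hweights, mul_pow, hζ]; ring)
    exact Module.End.hasEigenvalue_of_hasEigenvector ⟨(hrec v).2 (by simpa using hv), hv0⟩

theorem Complex.re_le_cos_pi_div_of_pow_eq_neg_one {k : ℕ} (hk : k ≠ 0) {w : ℂ}
    (hw : w ^ k = -1) : w.re ≤ Real.cos (π / k) := by
  have hnorm : ‖w‖ = 1 :=
    (pow_eq_one_iff_of_nonneg (norm_nonneg w) hk).1 (by rw [← norm_pow, hw, norm_neg, norm_one])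
  have hw0 : w ≠ 0 := norm_ne_zero_iff.1 (by rw [hnorm]; exact one_ne_zero)
  have hexp : exp (k * (w.arg * I)) = exp (π * I) := by
    rw [exp_nat_mul, ← one_mul (exp _), ← ofReal_one, ← hnorm, norm_mul_exp_arg_mul_I, hw,
      exp_pi_mul_I]
  obtain ⟨n, hn⟩ := exp_eq_exp_iff_exists_int.1 hexp
  -- `k · arg w` is an odd multiple of `π`, so `|arg w| ≥ π / k`.
  have hk_arg : k * w.arg = (2 * n + 1) * π := by
    have him : (k : ℝ) * w.arg = π + n * (2 * π) := by simpa using congrArg im hn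
    linarith
  have hodd : (1 : ℝ) ≤ |2 * (n : ℝ) + 1| := by
    exact_mod_cast Int.one_le_abs (by omega : 2 * n + 1 ≠ 0)
  have hk_pos : (0 : ℝ) < k := by positivity
  have harg : π / k ≤ |w.arg| := by
    rw [div_le_iff₀ hk_pos, ← abs_of_pos hk_pos, ← abs_mul, mul_comm, hk_arg, abs_mul,
      abs_of_pos pi_pos]
    nlinarith [pi_pos]
  calc w.re = Real.cos |w.arg| := by rw [Real.cos_abs, cos_arg hw0, hnorm, div_one]
    _ ≤ Real.cos (π / k) :=
      Real.cos_le_cos_of_nonneg_of_le_pi (by positivity) (abs_arg_le_pi w) harg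

theorem Complex.exp_pi_div_mul_I_pow {k : ℕ} (hk : k ≠ 0) :
    exp ((π / k : ℝ) * I) ^ k = -1 := by
  rw [← exp_nat_mul, ← mul_assoc]
  push_cast
  rw [mul_div_cancel₀ _ (Nat.cast_ne_zero.2 hk), exp_pi_mul_I]

theorem statement13_general (k : ℕ) [NeZero k] (hk : 3 ≤ k) (J : ℝ) (hJ : 0 < J)
    (s : ZMod k → ℝ)
    (hprod : ∏ i : ZMod k, s i = -1) :
    (J < 2 / Real.cos (Real.pi / k) →
      ∀ z : ℂ,
        Module.End.HasEigenvalue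
          (Matrix.toLin' ((cycA k J s).map (fun a => (a : ℂ)))) z →
        z.re < 0) ∧
    (2 / Real.cos (Real.pi / k) < J →
      Module.End.HasEigenvalue
        (Matrix.toLin' ((cycA k J s).map (fun a => (a : ℂ))))
        ((J : ℂ) * Complex.exp (Complex.I * (Real.pi / k)) - 2) ∧
      0 < ((J : ℂ) * Complex.exp (Complex.I * (Real.pi / k)) - 2).re ∧
      0 < ((J : ℂ) * Complex.exp (Complex.I * (Real.pi / k)) - 2).im ∧
      Module.End.HasEigenvalue
        (Matrix.toLin' ((cycA k J s).map (fun a => (a : ℂ))))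
        ((starRingEnd ℂ)
          ((J : ℂ) * Complex.exp (Complex.I * (Real.pi / k)) - 2))) := by
  have heig (z : ℂ) := hasEigenvalue_cycA_iff (by omega) hJ.ne' hprod (z := z)
  have hθ_pos : 0 < π / k := by positivity
  have hθ_lt : π / k < π / 2 := by
    gcongr
    exact_mod_cast (by omega : 2 < k)
  have hcos : 0 < Real.cos (π / k) := cos_pos_of_mem_Ioo ⟨by linarith, hθ_lt⟩
  refine ⟨fun hJc z hz => ?_, fun hJc => ?_⟩
  · obtain ⟨ζ, hζ, rfl⟩ := (heig z).1 hz
    have hζ_re := Complex.re_le_cos_pi_div_of_pow_eq_neg_one (by omega) hζ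
    have hJ_cos : J * Real.cos (π / k) < 2 := (lt_div_iff₀ hcos).1 hJc
    simp only [Complex.sub_re, Complex.re_ofReal_mul, Complex.re_ofNat]
    nlinarith
  · have hζ_def : Complex.exp (Complex.I * (π / k)) = Complex.exp ((π / k : ℝ) * Complex.I) := by
      push_cast; ring_nf
    rw [hζ_def]
    set ζ := Complex.exp ((π / k : ℝ) * Complex.I) with hζ_eq
    have hζ : ζ ^ k = -1 := Complex.exp_pi_div_mul_I_pow (NeZero.ne k)
    have hJ_cos : 2 < J * Real.cos (π / k) := (div_lt_iff₀ hcos).1 hJc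
    refine ⟨(heig _).2 ⟨ζ, hζ, rfl⟩, ?_, ?_, (heig _).2 ⟨starRingEnd ℂ ζ, ?_, ?_⟩⟩
    · rw [Complex.sub_re, Complex.re_ofReal_mul, hζ_eq, Complex.exp_ofReal_mul_I_re]
      simpa using hJ_cos
    · rw [Complex.sub_im, Complex.im_ofReal_mul, hζ_eq, Complex.exp_ofReal_mul_I_im]
      simpa using mul_pos hJ (sin_pos_of_pos_of_lt_pi hθ_pos (by linarith))
    · rw [← map_pow, hζ, map_neg, map_one]
    · rw [map_sub, map_mul, Complex.conj_ofReal, map_ofNat]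

/-- Frustrated case `∏ s_i = −1`, `k ≥ 3`: if `J < 2/cos(π/k)` every eigenvalue
of `A` has strictly negative real part; if `J > 2/cos(π/k)` then
`J e^{iπ/k} − 2` is an eigenvalue with strictly positive real and imaginary
parts, and its complex conjugate is also an eigenvalue (Hopf bifurcation at
`J_c = 2/cos(π/k)`). -/
theorem statement13 (k : ℕ) [NeZero k] (hk : 3 ≤ k) (J : ℝ) (hJ : 0 < J)
    (s : ZMod k → ℝ) (hs : ∀ i, s i = 1 ∨ s i = -1)
    (hprod : ∏ i : ZMod k, s i = -1) :
    (J < 2 / Real.cos (Real.pi / k) →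
      ∀ z : ℂ,
        Module.End.HasEigenvalue
          (Matrix.toLin' ((cycA k J s).map (fun a => (a : ℂ)))) z →
        z.re < 0) ∧
    (2 / Real.cos (Real.pi / k) < J →
      Module.End.HasEigenvalue
        (Matrix.toLin' ((cycA k J s).map (fun a => (a : ℂ))))
        ((J : ℂ) * Complex.exp (Complex.I * (Real.pi / k)) - 2) ∧
      0 < ((J : ℂ) * Complex.exp (Complex.I * (Real.pi / k)) - 2).re ∧
      0 < ((J : ℂ) * Complex.exp (Complex.I * (Real.pi / k)) - 2).im ∧
      Module.End.HasEigenvalue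
        (Matrix.toLin' ((cycA k J s).map (fun a => (a : ℂ))))
        ((starRingEnd ℂ)
          ((J : ℂ) * Complex.exp (Complex.I * (Real.pi / k)) - 2))) :=
  statement13_general k hk J hJ s hprod
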